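/- arXiv:2101.05265 — 2 statements merged into one kernel-verified Lean document; each statement's English description precedes it below -/
import Mathlib

section
/- The unique fixed point d* of the policy similarity operator is a pseudometric: it is nonnegative, symmetric, vanishes on the diagonal, and satisfies the triangle inequality d*(x,y) ≤ d*(x,z) + d*(z,y). -/
open scoped BigOperators

noncomputable section

/-- A probability distribution on a finite type, as a nonnegative function summing to 1. -/
def IsProbDist {S : Type*} [Fintype S] (P : S → ℝ) : Prop :=
  (∀ x, 0 ≤ P x) ∧ ∑ x, P x = 1

/-- A coupling of two distributions on finite types. -/
def IsCoupling {S T : Type*} [Fintype S] [Fintype T]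
    (Γ : S → T → ℝ) (P : S → ℝ) (Q : T → ℝ) : Prop :=
  (∀ x y, 0 ≤ Γ x y) ∧ (∀ x, ∑ y, Γ x y = P x) ∧ (∀ y, ∑ x, Γ x y = Q y)

/-- 1-Wasserstein distance: minimal transport cost over couplings. -/
def W1 {S T : Type*} [Fintype S] [Fintype T]
    (d : S → T → ℝ) (P : S → ℝ) (Q : T → ℝ) : ℝ :=
  sInf {c | ∃ Γ, IsCoupling Γ P Q ∧ c = ∑ x, ∑ y, Γ x y * d x y}

/-- A pseudometric: nonnegative, vanishing on the diagonal, symmetric, triangle inequality. -/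
def IsPseudometric {S : Type*} (d : S → S → ℝ) : Prop :=
  (∀ x y, 0 ≤ d x y) ∧ (∀ x, d x x = 0) ∧ (∀ x y, d x y = d y x) ∧
    (∀ x y z, d x z ≤ d x y + d y z)

/-- Sup norm distance between two functions on a product of finite types. -/
def supDist {S T : Type*} [Fintype S] [Fintype T] (d d' : S → T → ℝ) : ℝ :=
  ⨆ p : S × T, |d p.1 p.2 - d' p.1 p.2|

/-- Total variation distance between distributions on a finite action set. -/
def tv {A : Type*} [Fintype A] (p q : A → ℝ) : ℝ := (∑ a, |p a - q a|) / 2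

section AuxPSM
variable {S : Type*} [Fintype S]

lemma prod_coupling {P Q : S → ℝ} (hP : IsProbDist P) (hQ : IsProbDist Q) :
    IsCoupling (fun x y => P x * Q y) P Q := by
  refine ⟨fun x y => mul_nonneg (hP.1 x) (hQ.1 y), fun x => ?_, fun y => ?_⟩
  · rw [← Finset.mul_sum, hQ.2, mul_one]
  · rw [← Finset.sum_mul, hP.2, one_mul]

lemma coupling_mass {Γ : S → S → ℝ} {P Q : S → ℝ} (hΓ : IsCoupling Γ P Q)
    (hP : IsProbDist P) : ∑ x, ∑ y, Γ x y = 1 := by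
  have h : ∀ x, ∑ y, Γ x y = P x := hΓ.2.1
  simp only [h, hP.2]

lemma le_cost {Γ : S → S → ℝ} {P Q : S → ℝ} (hΓ : IsCoupling Γ P Q)
    (hP : IsProbDist P) {d : S → S → ℝ} {m : ℝ} (hm : ∀ x y, m ≤ d x y) :
    m ≤ ∑ x, ∑ y, Γ x y * d x y := by
  have h1 : ∑ x, ∑ y, Γ x y * m ≤ ∑ x, ∑ y, Γ x y * d x y :=
    Finset.sum_le_sum fun x _ => Finset.sum_le_sum fun y _ =>
      mul_le_mul_of_nonneg_left (hm x y) (hΓ.1 x y)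
  have h2 : ∑ x, ∑ y, Γ x y * m = m := by
    simp only [← Finset.sum_mul, coupling_mass hΓ hP, one_mul]
  linarith

lemma W1_bddBelow {P Q : S → ℝ} (hP : IsProbDist P) {d : S → S → ℝ} {m : ℝ}
    (hm : ∀ x y, m ≤ d x y) :
    BddBelow {c | ∃ Γ, IsCoupling Γ P Q ∧ c = ∑ x, ∑ y, Γ x y * d x y} :=
  ⟨m, fun c hc => by obtain ⟨Γ, hΓ, rfl⟩ := hc; exact le_cost hΓ hP hm⟩

lemma W1_le_cost {P Q : S → ℝ} (hP : IsProbDist P) {d : S → S → ℝ} {m : ℝ}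
    (hm : ∀ x y, m ≤ d x y) {Γ : S → S → ℝ} (hΓ : IsCoupling Γ P Q) :
    W1 d P Q ≤ ∑ x, ∑ y, Γ x y * d x y :=
  csInf_le (W1_bddBelow hP hm) ⟨Γ, hΓ, rfl⟩

lemma le_W1 {P Q : S → ℝ} (hP : IsProbDist P) (hQ : IsProbDist Q) {d : S → S → ℝ} {b : ℝ}
    (h : ∀ Γ, IsCoupling Γ P Q → b ≤ ∑ x, ∑ y, Γ x y * d x y) : b ≤ W1 d P Q :=
  le_csInf ⟨_, ⟨_, prod_coupling hP hQ, rfl⟩⟩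
    (fun c hc => by obtain ⟨Γ, hΓ, rfl⟩ := hc; exact h Γ hΓ)

open Classical in
lemma diag_coupling {P : S → ℝ} (hP : IsProbDist P) :
    IsCoupling (fun x y => if x = y then P x else 0) P P := by
  classical
  refine ⟨fun x y => ?_, fun x => ?_, fun y => ?_⟩
  · simp only; split <;> simp [hP.1]
  · simp
  · simp

open Classical in
lemma glue_coupling {P Q R : S → ℝ} (hP : IsProbDist P) (hQ : IsProbDist Q)
    (hR : IsProbDist R) {Γ1 Γ2 : S → S → ℝ}
    (h1 : IsCoupling Γ1 P Q) (h2 : IsCoupling Γ2 Q R)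
    (d : S → S → ℝ) (T : ℝ) (hT : ∀ x y z, d x z ≤ d x y + d y z + T) :
    ∃ Γ, IsCoupling Γ P R ∧
      ∑ x, ∑ z, Γ x z * d x z ≤
        (∑ x, ∑ y, Γ1 x y * d x y) + (∑ y, ∑ z, Γ2 y z * d y z) + T := by
  classical
  set c : S → S → S → ℝ := fun x y z => if Q y = 0 then 0 else Γ1 x y * Γ2 y z / Q y with hc
  have hz1 : ∀ x y, Q y = 0 → Γ1 x y = 0 := by
    intro x y hq
    have h := Finset.single_le_sum (f := fun x' => Γ1 x' y)
      (fun i _ => h1.1 i y) (Finset.mem_univ x)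
    rw [h1.2.2 y, hq] at h
    exact le_antisymm h (h1.1 x y)
  have hc0 : ∀ x y z, 0 ≤ c x y z := by
    intro x y z
    simp only [hc]
    split
    · exact le_refl 0
    · exact div_nonneg (mul_nonneg (h1.1 x y) (h2.1 y z)) (hQ.1 y)
  have hcz : ∀ x y, ∑ z, c x y z = Γ1 x y := by
    intro x y
    by_cases hq : Q y = 0
    · simp [hc, hq, hz1 x y hq]
    · simp only [hc, if_neg hq]
      have h : ∀ z, Γ1 x y * Γ2 y z / Q y = (Γ1 x y / Q y) * Γ2 y z := fun z => by ring
      rw [Finset.sum_congr rfl (fun z _ => h z), ← Finset.mul_sum, h2.2.1 y,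
        div_mul_cancel₀ _ hq]
  have hcx : ∀ y z, ∑ x, c x y z = Γ2 y z := by
    intro y z
    by_cases hq : Q y = 0
    · have hz2 : Γ2 y z = 0 := by
        have h := Finset.single_le_sum (f := fun z' => Γ2 y z')
          (fun i _ => h2.1 y i) (Finset.mem_univ z)
        rw [h2.2.1 y, hq] at h
        exact le_antisymm h (h2.1 y z)
      simp [hc, hq, hz2]
    · simp only [hc, if_neg hq]
      have h : ∀ x, Γ1 x y * Γ2 y z / Q y = Γ1 x y * (Γ2 y z / Q y) := fun x => by ring
      rw [Finset.sum_congr rfl (fun x _ => h x), ← Finset.sum_mul, h1.2.2 y]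
      field_simp
  refine ⟨fun x z => ∑ y, c x y z, ⟨fun x z => Finset.sum_nonneg fun y _ => hc0 x y z,
    fun x => ?_, fun z => ?_⟩, ?_⟩
  · rw [Finset.sum_comm]
    simp only [hcz]
    exact h1.2.1 x
  · rw [Finset.sum_comm]
    simp only [hcx]
    exact h2.2.2 z
  · have step1 : ∑ x, ∑ z, (∑ y, c x y z) * d x z
        = ∑ x, ∑ z, ∑ y, c x y z * d x z := by
      refine Finset.sum_congr rfl fun x _ => Finset.sum_congr rfl fun z _ => ?_
      rw [Finset.sum_mul]
    have step2 : ∑ x, ∑ z, ∑ y, c x y z * d x z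
        ≤ ∑ x, ∑ z, ∑ y, c x y z * (d x y + d y z + T) := by
      refine Finset.sum_le_sum fun x _ => Finset.sum_le_sum fun z _ =>
        Finset.sum_le_sum fun y _ => mul_le_mul_of_nonneg_left (hT x y z) (hc0 x y z)
    have step3 : ∑ x, ∑ z, ∑ y, c x y z * (d x y + d y z + T)
        = (∑ x, ∑ z, ∑ y, c x y z * d x y) + (∑ x, ∑ z, ∑ y, c x y z * d y z)
          + (∑ x, ∑ z, ∑ y, c x y z * T) := by
      simp only [mul_add, Finset.sum_add_distrib]
    have tA : ∑ x, ∑ z, ∑ y, c x y z * d x y = ∑ x, ∑ y, Γ1 x y * d x y := by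
      refine Finset.sum_congr rfl fun x _ => ?_
      rw [Finset.sum_comm]
      refine Finset.sum_congr rfl fun y _ => ?_
      rw [← Finset.sum_mul, hcz]
    have tB : ∑ x, ∑ z, ∑ y, c x y z * d y z = ∑ y, ∑ z, Γ2 y z * d y z := by
      rw [Finset.sum_comm]
      have e : ∀ z, ∑ x, ∑ y, c x y z * d y z = ∑ y, Γ2 y z * d y z := by
        intro z
        rw [Finset.sum_comm]
        exact Finset.sum_congr rfl fun y _ => by rw [← Finset.sum_mul, hcx]
      rw [Finset.sum_congr rfl fun z _ => e z, Finset.sum_comm]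
    have tC : ∑ x, ∑ z, ∑ y, c x y z * T = T := by
      have e1 : ∀ x, ∑ z, ∑ y, c x y z * T = P x * T := by
        intro x
        rw [Finset.sum_comm]
        have e2 : ∀ y, ∑ z, c x y z * T = Γ1 x y * T := fun y => by
          rw [← Finset.sum_mul, hcz]
        rw [Finset.sum_congr rfl fun y _ => e2 y, ← Finset.sum_mul, h1.2.1]
      rw [Finset.sum_congr rfl fun x _ => e1 x, ← Finset.sum_mul, hP.2, one_mul]
    simp only
    rw [step1]
    linarith

end AuxPSM

/-- The fixed point of the policy similarity operator is a pseudometric. -/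
theorem psm_is_pseudometric {S A : Type*} [Fintype S] [Nonempty S] [Fintype A]
    (γ : ℝ) (hγ0 : 0 ≤ γ) (hγ1 : γ < 1)
    (π : S → A → ℝ) (hπ : ∀ x, IsProbDist (π x))
    (Pk : S → S → ℝ) (hPk : ∀ x, IsProbDist (Pk x))
    (Dist : (A → ℝ) → (A → ℝ) → ℝ) (hDist : IsPseudometric Dist)
    (C : ℝ) (hC : ∀ p q, Dist p q ≤ C)
    (dstar : S → S → ℝ)
    (hfix : ∀ x y, dstar x y = Dist (π x) (π y) + γ * W1 dstar (Pk x) (Pk y)) :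
    IsPseudometric dstar := by
  classical
  -- global minimum of dstar
  obtain ⟨p0, -, hp0⟩ := Finset.exists_min_image (Finset.univ : Finset (S × S))
    (fun p => dstar p.1 p.2) Finset.univ_nonempty
  have hm : ∀ x y, dstar p0.1 p0.2 ≤ dstar x y := fun x y => hp0 (x, y) (Finset.mem_univ _)
  set m := dstar p0.1 p0.2 with hm_def
  -- Step 1: nonnegativity
  have hm0 : 0 ≤ m := by
    have hw : m ≤ W1 dstar (Pk p0.1) (Pk p0.2) :=
      le_W1 (hPk _) (hPk _) (fun Γ hΓ => le_cost hΓ (hPk _) hm)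
    have heq := hfix p0.1 p0.2
    have hD := hDist.1 (π p0.1) (π p0.2)
    have hγw := mul_le_mul_of_nonneg_left hw hγ0
    rw [← hm_def] at heq
    nlinarith
  have hnn : ∀ x y, 0 ≤ dstar x y := fun x y => le_trans hm0 (hm x y)
  -- Step 2: diagonal vanishes
  have hdiag : ∀ x, dstar x x = 0 := by
    obtain ⟨x0, -, hx0⟩ := Finset.exists_max_image (Finset.univ : Finset S)
      (fun x => dstar x x) Finset.univ_nonempty
    have hM : ∀ x, dstar x x ≤ dstar x0 x0 := fun x => hx0 x (Finset.mem_univ x)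
    set M := dstar x0 x0 with hM_def
    have hle : ∀ x, dstar x x ≤ γ * M := by
      intro x
      have hw : W1 dstar (Pk x) (Pk x) ≤ M := by
        have hcost := W1_le_cost (hPk x) hm (diag_coupling (hPk x))
        have inner : ∀ a, ∑ b, (if a = b then Pk x a else 0) * dstar a b
            = Pk x a * dstar a a := by
          intro a
          rw [Finset.sum_eq_single a]
          · simp
          · intro b _ hb
            simp [(Ne.symm hb : a ≠ b)]
          · intro h; exact absurd (Finset.mem_univ a) h
        rw [Finset.sum_congr rfl fun a _ => inner a] at hcost
        have hub : ∑ a, Pk x a * dstar a a ≤ M := by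
          have h1 : ∑ a, Pk x a * dstar a a ≤ ∑ a, Pk x a * M :=
            Finset.sum_le_sum fun a _ =>
              mul_le_mul_of_nonneg_left (hM a) ((hPk x).1 a)
          rw [← Finset.sum_mul, (hPk x).2, one_mul] at h1
          exact h1
        linarith
      have heq := hfix x x
      rw [hDist.2.1 (π x)] at heq
      have := mul_le_mul_of_nonneg_left hw hγ0
      linarith
    have hM0 : 0 ≤ M := hnn x0 x0
    have hMle : M ≤ γ * M := hle x0
    have hMz : M ≤ 0 := by nlinarith
    intro x
    have := hle x
    have := hnn x x
    nlinarith
  -- Step 3: symmetry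
  have hsymm : ∀ x y, dstar x y = dstar y x := by
    obtain ⟨q0, -, hq0⟩ := Finset.exists_max_image (Finset.univ : Finset (S × S))
      (fun p => dstar p.1 p.2 - dstar p.2 p.1) Finset.univ_nonempty
    have hDub : ∀ x y, dstar x y - dstar y x ≤ dstar q0.1 q0.2 - dstar q0.2 q0.1 :=
      fun x y => hq0 (x, y) (Finset.mem_univ _)
    set D := dstar q0.1 q0.2 - dstar q0.2 q0.1 with hD_def
    have hD0 : 0 ≤ D := by
      have := hDub q0.1 q0.1
      linarith
    have hWsym : ∀ x y, W1 dstar (Pk x) (Pk y) ≤ W1 dstar (Pk y) (Pk x) + D := by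
      intro x y
      have key : W1 dstar (Pk x) (Pk y) - D ≤ W1 dstar (Pk y) (Pk x) := by
        apply le_W1 (hPk y) (hPk x)
        intro Γ hΓ
        have hΓT : IsCoupling (fun a b => Γ b a) (Pk x) (Pk y) :=
          ⟨fun a b => hΓ.1 b a, fun a => hΓ.2.2 a, fun b => hΓ.2.1 b⟩
        have h1 : W1 dstar (Pk x) (Pk y) ≤ ∑ a, ∑ b, Γ b a * dstar a b :=
          W1_le_cost (hPk x) hm hΓT
        have h2 : ∑ a, ∑ b, Γ b a * dstar a b ≤ ∑ a, ∑ b, Γ b a * (dstar b a + D) :=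
          Finset.sum_le_sum fun a _ => Finset.sum_le_sum fun b _ =>
            mul_le_mul_of_nonneg_left (by have := hDub a b; linarith) (hΓ.1 b a)
        have h3a : ∑ a, ∑ b, Γ b a * dstar b a = ∑ b, ∑ a, Γ b a * dstar b a :=
          Finset.sum_comm
        have h3b : ∑ a, ∑ b, Γ b a * D = D := by
          have e : ∑ a, ∑ b, Γ b a * D = (∑ b, ∑ a, Γ b a) * D := by
            rw [Finset.sum_comm]
            simp only [← Finset.sum_mul]
          rw [e, coupling_mass hΓ (hPk y), one_mul]
        have h3 : ∑ a, ∑ b, Γ b a * (dstar b a + D)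
            = (∑ b, ∑ a, Γ b a * dstar b a) + D := by
          simp only [mul_add, Finset.sum_add_distrib]
          rw [h3a, h3b]
        linarith
      linarith
    have hDle : D ≤ γ * D := by
      have heq1 := hfix q0.1 q0.2
      have heq2 := hfix q0.2 q0.1
      have hsD := hDist.2.2.1 (π q0.1) (π q0.2)
      have hw := hWsym q0.1 q0.2
      have := mul_le_mul_of_nonneg_left
        (show W1 dstar (Pk q0.1) (Pk q0.2) - W1 dstar (Pk q0.2) (Pk q0.1) ≤ D by linarith) hγ0
      nlinarith
    have hDz : D ≤ 0 := by nlinarith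
    intro x y
    have h1 := hDub x y
    have h2 := hDub y x
    linarith
  -- Step 4: triangle inequality
  have htri : ∀ x y z, dstar x z ≤ dstar x y + dstar y z := by
    obtain ⟨t0, -, ht0⟩ := Finset.exists_max_image (Finset.univ : Finset (S × S × S))
      (fun t => dstar t.1 t.2.2 - dstar t.1 t.2.1 - dstar t.2.1 t.2.2) Finset.univ_nonempty
    have hTub : ∀ x y z, dstar x z - dstar x y - dstar y z
        ≤ dstar t0.1 t0.2.2 - dstar t0.1 t0.2.1 - dstar t0.2.1 t0.2.2 :=
      fun x y z => ht0 (x, y, z) (Finset.mem_univ _)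
    set T := dstar t0.1 t0.2.2 - dstar t0.1 t0.2.1 - dstar t0.2.1 t0.2.2 with hT_def
    have hT0 : 0 ≤ T := by
      obtain ⟨x⟩ := (inferInstance : Nonempty S)
      have := hTub x x x
      rw [hdiag x] at this
      linarith
    have hTpt : ∀ x y z, dstar x z ≤ dstar x y + dstar y z + T := by
      intro x y z
      have := hTub x y z
      linarith
    have hWtri : ∀ x y z, W1 dstar (Pk x) (Pk z)
        ≤ W1 dstar (Pk x) (Pk y) + W1 dstar (Pk y) (Pk z) + T := by
      intro x y z
      have step2 : ∀ Γ2, IsCoupling Γ2 (Pk y) (Pk z) →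
          W1 dstar (Pk x) (Pk z) - T - (∑ a, ∑ b, Γ2 a b * dstar a b)
            ≤ W1 dstar (Pk x) (Pk y) := by
        intro Γ2 hΓ2
        apply le_W1 (hPk x) (hPk y)
        intro Γ1 hΓ1
        obtain ⟨Γ, hΓ, hcost⟩ :=
          glue_coupling (hPk x) (hPk y) (hPk z) hΓ1 hΓ2 dstar T hTpt
        have := W1_le_cost (hPk x) hm hΓ
        linarith
      have key : W1 dstar (Pk x) (Pk z) - T - W1 dstar (Pk x) (Pk y)
          ≤ W1 dstar (Pk y) (Pk z) := by
        apply le_W1 (hPk y) (hPk z)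
        intro Γ2 hΓ2
        have := step2 Γ2 hΓ2
        linarith
      linarith
    have hTle : T ≤ γ * T := by
      have heq1 := hfix t0.1 t0.2.2
      have heq2 := hfix t0.1 t0.2.1
      have heq3 := hfix t0.2.1 t0.2.2
      have hsD := hDist.2.2.2 (π t0.1) (π t0.2.1) (π t0.2.2)
      have hw := hWtri t0.1 t0.2.1 t0.2.2
      have := mul_le_mul_of_nonneg_left
        (show W1 dstar (Pk t0.1) (Pk t0.2.2) - W1 dstar (Pk t0.1) (Pk t0.2.1)
          - W1 dstar (Pk t0.2.1) (Pk t0.2.2) ≤ T by linarith) hγ0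
      nlinarith
    have hTz : T ≤ 0 := by nlinarith
    intro x y z
    have := hTub x y z
    linarith
  exact ⟨hnn, hdiag, hsymm, htri⟩
end
end

section
/- Let d* be a nonnegative function on X × Y and g : Y → ℝ a nonnegative function such that g(y₁) ≤ ((1+γ)/(1−γ)) d*(x̃_{y₁}, y₁) for all y₁, where x̃_{y₁} = argmin_x d*(x, y₁). Then for any y₀ and any x₀, Σ_{y₁} P(y₁|y₀) g(y₁) ≤ ((1+γ)/(1−γ)) · W₁(d*)(Q(·|x₀), P(·|y₀)) + ((1+γ)/(1−γ)) · Σ_{x₁} Q(x₁|x₀)·0, i.e., the expected value Σ_{y₁} P(y₁|y₀) (1−γ)/(1+γ) g(y₁) is a feasible dual value and hence Σ_{y₁} P(y₁|y₀) g(y₁) ≤ ((1+γ)/(1−γ)) W₁(d*)(Q(·|x₀), P(·|y₀)). -/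
open scoped BigOperators

noncomputable section

/-
The potentials `u ≡ 0` on `X` and `v = (1 - γ)/(1 + γ) · g` on `Y` are feasible for the
Kantorovich dual of `W1 dstar`, because `g y` is bounded by a multiple of `min_x dstar x y`.
Weak duality then bounds the value `∑ P v` of this dual pair by `W1 dstar Q P`.
-/

theorem IsProbDist.isCoupling_mul {S T : Type*} [Fintype S] [Fintype T] {P : S → ℝ} {Q : T → ℝ}
    (hP : IsProbDist P) (hQ : IsProbDist Q) : IsCoupling (fun x y => P x * Q y) P Q := by
  refine ⟨fun x y => mul_nonneg (hP.1 x) (hQ.1 y), fun x => ?_, fun y => ?_⟩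
  · rw [← Finset.mul_sum, hQ.2, mul_one]
  · rw [← Finset.sum_mul, hP.2, one_mul]

theorem IsCoupling.dual_le_cost {S T : Type*} [Fintype S] [Fintype T] {Γ : S → T → ℝ}
    {P : S → ℝ} {Q : T → ℝ} (hΓ : IsCoupling Γ P Q) {d : S → T → ℝ} {u : S → ℝ} {v : T → ℝ}
    (huv : ∀ x y, u x + v y ≤ d x y) :
    ∑ x, P x * u x + ∑ y, Q y * v y ≤ ∑ x, ∑ y, Γ x y * d x y := by
  obtain ⟨hΓ0, hΓP, hΓQ⟩ := hΓ
  calc ∑ x, P x * u x + ∑ y, Q y * v y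
      = ∑ x, ∑ y, Γ x y * (u x + v y) := by
        simp only [mul_add, Finset.sum_add_distrib, ← hΓP, ← hΓQ, Finset.sum_mul]
        rw [Finset.sum_comm (f := fun y x => Γ x y * v y)]
    _ ≤ ∑ x, ∑ y, Γ x y * d x y := by
        gcongr with x _ y _
        · exact hΓ0 x y
        · exact huv x y

theorem dual_le_W1 {S T : Type*} [Fintype S] [Fintype T] {P : S → ℝ} {Q : T → ℝ}
    (hP : IsProbDist P) (hQ : IsProbDist Q) {d : S → T → ℝ} {u : S → ℝ} {v : T → ℝ}
    (huv : ∀ x y, u x + v y ≤ d x y) :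
    ∑ x, P x * u x + ∑ y, Q y * v y ≤ W1 d P Q :=
  le_csInf ⟨_, _, hP.isCoupling_mul hQ, rfl⟩ fun _ ⟨_, hΓ, hc⟩ => hc ▸ hΓ.dual_le_cost huv

theorem second_half_general {X Y : Type*} [Fintype X] [Fintype Y]
    (γ : ℝ) (hγ0 : 0 ≤ γ) (hγ1 : γ < 1)
    (dstar : X → Y → ℝ)
    (xt : Y → X) (hxt : ∀ y x, dstar (xt y) y ≤ dstar x y)
    (g : Y → ℝ)
    (hg : ∀ y, g y ≤ (1 + γ) / (1 - γ) * dstar (xt y) y)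
    (P : Y → ℝ) (hP : IsProbDist P) (Q : X → ℝ) (hQ : IsProbDist Q) :
    ∑ y1, P y1 * g y1 ≤ (1 + γ) / (1 - γ) * W1 dstar Q P := by
  set c := (1 + γ) / (1 - γ)
  have hc : 0 < c := div_pos (by linarith) (by linarith)
  have hfeasible : ∀ x y, (0 : ℝ) + g y / c ≤ dstar x y := fun x y => by
    rw [zero_add, div_le_iff₀' hc]
    exact (hg y).trans (mul_le_mul_of_nonneg_left (hxt y x) hc.le)
  have hdual := dual_le_W1 hQ hP hfeasible
  simp only [mul_zero, Finset.sum_const_zero, zero_add, mul_div, ← Finset.sum_div] at hdual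
  rwa [div_le_iff₀' hc] at hdual

/-- Feasible dual value bound (Lemma secondHalf). -/
theorem second_half {X Y : Type*} [Fintype X] [Fintype Y] [Nonempty X] [Nonempty Y]
    (γ : ℝ) (hγ0 : 0 ≤ γ) (hγ1 : γ < 1)
    (dstar : X → Y → ℝ) (hd0 : ∀ x y, 0 ≤ dstar x y)
    (xt : Y → X) (hxt : ∀ y x, dstar (xt y) y ≤ dstar x y)
    (g : Y → ℝ) (hg0 : ∀ y, 0 ≤ g y)
    (hg : ∀ y, g y ≤ (1 + γ) / (1 - γ) * dstar (xt y) y)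
    (P : Y → ℝ) (hP : IsProbDist P) (Q : X → ℝ) (hQ : IsProbDist Q) :
    ∑ y1, P y1 * g y1 ≤ (1 + γ) / (1 - γ) * W1 dstar Q P :=
  second_half_general γ hγ0 hγ1 dstar xt hxt g hg P hP Q hQ
end
end
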